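/- Let Y be a random variable taking values in the positive reals and suppose X = log₁₀ Y has probability density function g : ℝ → ℝ (nonnegative, integrable, integrating to 1). For x ∈ [0,1) define g†(x) = Σ_{k ∈ ℤ} g(x + k). Then for any m ≥ 1 and digits d₁ ∈ {1,…,9}, d₂,…,d_m ∈ {0,…,9} with x_m = 10^{m−1}d₁ + ⋯ + d_m, the expectation E[S_{d₁⋯d_m} Y] = E[ 1{first m significant digits of Y are d₁,…,d_m} · S(Y) ] equals the integral from log₁₀(x_m/10^{m−1}) to log₁₀((x_m+1)/10^{m−1}) of 10^x · g†(x) dx. -/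

import Mathlib

/-!
Since `S(y) = 10 ^ fract (log₁₀ y)` and `y` has first digits `d` exactly when
`fract (log₁₀ y) ∈ [a, b)` with `a, b` the two logarithms in the statement, the integrand of
`E[S_d Y]` is `φ (fract X)` with `φ = 1_{[a,b)} · 10^·` and `X = log₁₀ Y`. Cutting `ℝ` into the
unit intervals `[k, k + 1)` and translating each one back to `[0, 1)` turns `∫ φ (fract x) g x dx`
into `∫_{[0,1)} φ x g†(x) dx`, and `[a, b) ⊆ [0, 1)`. In `ℝ≥0∞` the exchange of the sum over `k`
with the integral is free; integrability of `g` makes `g†` finite almost everywhere on `[0, 1)`,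
so the real series `∑ g (x + k)` agrees with it there.
-/

open MeasureTheory Real

/-- The base-10 significand `S(y) = 10 ^ (log₁₀ y − ⌊log₁₀ y⌋) ∈ [1,10)`. -/
noncomputable def signif (y : ℝ) : ℝ :=
  (10 : ℝ) ^ (Real.logb 10 y - (⌊Real.logb 10 y⌋ : ℝ))

/-- `d : Fin n → ℕ` is a valid digit tuple: every digit is at most 9 and the
leading digit (index 0) is at least 1. -/
def IsDigitTuple (n : ℕ) (d : Fin n → ℕ) : Prop :=
  (∀ i, d i ≤ 9) ∧ ∀ i : Fin n, (i : ℕ) = 0 → 1 ≤ d i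

/-- `xₙ = 10^(n−1) d₁ + 10^(n−2) d₂ + ⋯ + dₙ` for a digit tuple `d`. -/
def digitVal (n : ℕ) (d : Fin n → ℕ) : ℕ :=
  ∑ i : Fin n, d i * 10 ^ (n - 1 - (i : ℕ))

/-- `y > 0` has first `n` significant digits given by the tuple `d` iff
`⌊10^(n−1) · S(y)⌋ = xₙ`. -/
def HasFirstDigits (n : ℕ) (d : Fin n → ℕ) (y : ℝ) : Prop :=
  ⌊(10 : ℝ) ^ (n - 1) * signif y⌋ = (digitVal n d : ℤ)

/-- A random variable `Y` on `(Ω, P)` is `n`-digit Benford if for every valid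
digit tuple `d`, the probability that the first `n` significant digits of `Y`
are `d₁, …, dₙ` equals `log₁₀ (1 + 1/xₙ)`. -/
def NDigitBenford {Ω : Type*} [MeasurableSpace Ω] (P : Measure Ω) (Y : Ω → ℝ)
    (n : ℕ) : Prop :=
  ∀ d : Fin n → ℕ, IsDigitTuple n d →
    P {ω | HasFirstDigits n d (Y ω)}
      = ENNReal.ofReal (Real.logb 10 (1 + 1 / (digitVal n d : ℝ)))

/-- The expected significand sum `E[S_{d₁⋯dₙ} Y]`: the expectation of `S(Y)`
restricted to the event that the first `n` significant digits of `Y` are `d`. -/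
noncomputable def expSignifSum {Ω : Type*} [MeasurableSpace Ω] (P : Measure Ω)
    (Y : Ω → ℝ) (n : ℕ) (d : Fin n → ℕ) : ℝ :=
  ∫ ω, Set.indicator {ω | HasFirstDigits n d (Y ω)} (fun ω => signif (Y ω)) ω ∂P

open scoped ENNReal

theorem pow_le_digitVal {m : ℕ} (hm : 1 ≤ m) {d : Fin m → ℕ} (hd : IsDigitTuple m d) :
    10 ^ (m - 1) ≤ digitVal m d := by
  let i₀ : Fin m := ⟨0, hm⟩
  calc 10 ^ (m - 1) ≤ d i₀ * 10 ^ (m - 1 - (i₀ : ℕ)) :=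
        Nat.le_mul_of_pos_left _ (hd.2 i₀ rfl)
    _ ≤ digitVal m d :=
        Finset.single_le_sum (f := fun i : Fin m => d i * 10 ^ (m - 1 - (i : ℕ)))
          (fun _ _ => Nat.zero_le _) (Finset.mem_univ i₀)

theorem digitVal_pos {m : ℕ} (hm : 1 ≤ m) {d : Fin m → ℕ} (hd : IsDigitTuple m d) :
    0 < digitVal m d :=
  lt_of_lt_of_le (by positivity) (pow_le_digitVal hm hd)

theorem digitVal_lt_pow {m : ℕ} {d : Fin m → ℕ} (hd : IsDigitTuple m d) :
    digitVal m d < 10 ^ m := by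
  have hgeom : (∑ j ∈ Finset.range m, 10 ^ j) * 9 + 1 = 10 ^ m := geom_sum_mul_add 9 m
  have hle : digitVal m d ≤ (∑ j ∈ Finset.range m, 10 ^ j) * 9 :=
    calc digitVal m d ≤ ∑ i : Fin m, 9 * 10 ^ (m - 1 - (i : ℕ)) :=
          Finset.sum_le_sum fun i _ => Nat.mul_le_mul_right _ (hd.1 i)
      _ = ∑ j ∈ Finset.range m, 9 * 10 ^ (m - 1 - j) :=
          Fin.sum_univ_eq_sum_range (fun j => 9 * 10 ^ (m - 1 - j)) m
      _ = (∑ j ∈ Finset.range m, 10 ^ j) * 9 := by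
          rw [Finset.sum_range_reflect (fun j => 9 * 10 ^ j) m, Finset.sum_mul]
          simp only [mul_comm]
  omega

theorem floor_mul_rpow_eq_iff {B C : ℝ} (hB : 1 < B) (hC : 0 < C) {N : ℕ} (hN : 0 < N)
    (x : ℝ) :
    ⌊C * B ^ x⌋ = (N : ℤ) ↔ x ∈ Set.Ico (logb B (N / C)) (logb B ((N + 1) / C)) := by
  have hN' : (0 : ℝ) < N := Nat.cast_pos.mpr hN
  rw [mul_comm, Int.floor_eq_iff, Set.mem_Ico, logb_le_iff_le_rpow hB (by positivity),
    lt_logb_iff_rpow_lt hB (by positivity), div_le_iff₀ hC, lt_div_iff₀ hC]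
  push_cast
  rfl

theorem signif_eq_rpow_fract (y : ℝ) : signif y = 10 ^ Int.fract (logb 10 y) := by
  rw [signif, Int.self_sub_floor]

theorem hasFirstDigits_iff_fract_logb_mem {m : ℕ} (hm : 1 ≤ m) {d : Fin m → ℕ} (hd : IsDigitTuple m d)
    (y : ℝ) :
    HasFirstDigits m d y ↔ Int.fract (logb 10 y) ∈
      Set.Ico (logb 10 ((digitVal m d : ℝ) / 10 ^ (m - 1)))
        (logb 10 (((digitVal m d : ℝ) + 1) / 10 ^ (m - 1))) := by
  rw [HasFirstDigits, signif_eq_rpow_fract]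
  exact floor_mul_rpow_eq_iff (by norm_num) (by positivity) (digitVal_pos hm hd) _

theorem Ico_logb_digitVal_subset {m : ℕ} (hm : 1 ≤ m) {d : Fin m → ℕ}
    (hd : IsDigitTuple m d) :
    Set.Ico (logb 10 ((digitVal m d : ℝ) / 10 ^ (m - 1)))
        (logb 10 (((digitVal m d : ℝ) + 1) / 10 ^ (m - 1))) ⊆ Set.Ico 0 1 := by
  have hC : (0 : ℝ) < 10 ^ (m - 1) := by positivity
  have hlow : (10 : ℝ) ^ (m - 1) ≤ digitVal m d := by exact_mod_cast pow_le_digitVal hm hd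
  have hhigh : (digitVal m d : ℝ) + 1 ≤ 10 ^ (m - 1) * 10 := by
    rw [← pow_succ, Nat.sub_add_cancel hm]
    exact_mod_cast digitVal_lt_pow hd
  refine Set.Ico_subset_Ico (logb_nonneg (by norm_num) ((one_le_div hC).mpr hlow)) ?_
  rw [logb_le_iff_le_rpow (by norm_num) (by positivity), rpow_one, div_le_iff₀ hC, mul_comm]
  exact hhigh

/-- The wrapped density `g†` of the statement, for `ℝ≥0∞`-valued densities. -/
noncomputable def periodize (w : ℝ → ℝ≥0∞) (x : ℝ) : ℝ≥0∞ :=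
  ∑' k : ℤ, w (x + k)

theorem AEMeasurable.comp_add_intCast {w : ℝ → ℝ≥0∞} (hw : AEMeasurable w) (k : ℤ) :
    AEMeasurable fun x => w (x + k) :=
  hw.comp_quasiMeasurePreserving (measurePreserving_add_right volume (k : ℝ)).quasiMeasurePreserving

theorem AEMeasurable.periodize {w : ℝ → ℝ≥0∞} (hw : AEMeasurable w) :
    AEMeasurable (periodize w) :=
  AEMeasurable.tsum hw.comp_add_intCast

theorem lintegral_eq_tsum_setLIntegral_Ico_add (f : ℝ → ℝ≥0∞) :
    ∫⁻ x, f x = ∑' k : ℤ, ∫⁻ x in Set.Ico 0 1, f (x + k) :=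
  calc ∫⁻ x, f x = ∫⁻ x in ⋃ k : ℤ, Set.Ico (k : ℝ) (k + 1), f x := by
        rw [iUnion_Ico_intCast, Measure.restrict_univ]
    _ = ∑' k : ℤ, ∫⁻ x in Set.Ico (k : ℝ) (k + 1), f x :=
        lintegral_iUnion (fun _ => measurableSet_Ico) (Set.pairwise_disjoint_Ico_intCast ℝ) f
    _ = ∑' k : ℤ, ∫⁻ x in Set.Ico 0 1, f (x + k) := tsum_congr fun k => by
        rw [(measurePreserving_add_right volume (k : ℝ)).setLIntegral_comp_emb
          (measurableEmbedding_addRight _) f, Set.image_add_const_Ico, zero_add, add_comm 1]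

theorem lintegral_mul_comp_fract {w ψ : ℝ → ℝ≥0∞} (hw : AEMeasurable w) (hψ : Measurable ψ) :
    ∫⁻ x, w x * ψ (Int.fract x) = ∫⁻ x in Set.Ico 0 1, periodize w x * ψ x :=
  calc ∫⁻ x, w x * ψ (Int.fract x)
      = ∑' k : ℤ, ∫⁻ x in Set.Ico 0 1, w (x + k) * ψ (Int.fract (x + k)) :=
        lintegral_eq_tsum_setLIntegral_Ico_add _
    _ = ∑' k : ℤ, ∫⁻ x in Set.Ico 0 1, w (x + k) * ψ x := tsum_congr fun k =>
        setLIntegral_congr_fun measurableSet_Ico fun x hx => by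
          rw [Int.fract_add_intCast, Int.fract_eq_self.mpr hx]
    _ = ∫⁻ x in Set.Ico 0 1, ∑' k : ℤ, w (x + k) * ψ x :=
        (lintegral_tsum fun k => ((hw.comp_add_intCast k).mul hψ.aemeasurable).restrict).symm
    _ = ∫⁻ x in Set.Ico 0 1, periodize w x * ψ x := by
        simp only [periodize, ENNReal.tsum_mul_right]

theorem setLIntegral_Ico_periodize {w : ℝ → ℝ≥0∞} (hw : AEMeasurable w) :
    ∫⁻ x in Set.Ico 0 1, periodize w x = ∫⁻ x, w x := by
  simpa using (lintegral_mul_comp_fract hw measurable_const (ψ := 1)).symm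

theorem toReal_periodize_ofReal {g : ℝ → ℝ} (hg0 : ∀ x, 0 ≤ g x) (x : ℝ) :
    (periodize (fun x => ENNReal.ofReal (g x)) x).toReal = ∑' k : ℤ, g (x + k) := by
  rw [periodize, ENNReal.tsum_toReal_eq fun _ => ENNReal.ofReal_ne_top]
  simp only [ENNReal.toReal_ofReal (hg0 _)]

theorem integral_comp_fract_withDensity {g f : ℝ → ℝ} (hg0 : ∀ x, 0 ≤ g x)
    (hgInt : Integrable g) (hf0 : ∀ x, 0 ≤ f x) (hf : Measurable f) :
    ∫ x, f (Int.fract x) ∂volume.withDensity (fun x => ENNReal.ofReal (g x))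
      = ∫ x in Set.Ico 0 1, f x * ∑' k : ℤ, g (x + k) := by
  set w : ℝ → ℝ≥0∞ := fun x => ENNReal.ofReal (g x)
  have hw : AEMeasurable w := hgInt.aemeasurable.ennreal_ofReal
  have hfin : ∀ᵐ x ∂volume.restrict (Set.Ico 0 1), periodize w x ≠ ∞ := by
    refine (ae_lt_top' hw.periodize.restrict ?_).mono fun _ hx => hx.ne
    rw [setLIntegral_Ico_periodize hw]
    exact hgInt.lintegral_lt_top.ne
  simp_rw [← toReal_periodize_ofReal hg0]
  rw [integral_eq_lintegral_of_nonneg_ae (ae_of_all _ fun x => hf0 _)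
      (hf.comp measurable_fract).aestronglyMeasurable,
    integral_eq_lintegral_of_nonneg_ae
      (ae_of_all _ fun x => mul_nonneg (hf0 x) ENNReal.toReal_nonneg)
      (hf.aemeasurable.mul hw.periodize.ennreal_toReal).aestronglyMeasurable.restrict,
    lintegral_withDensity_eq_lintegral_mul₀ hw
      (g := fun x => ENNReal.ofReal (f (Int.fract x)))
      (hf.comp measurable_fract).ennreal_ofReal.aemeasurable]
  simp only [Pi.mul_apply]
  rw [lintegral_mul_comp_fract hw (ψ := fun x => ENNReal.ofReal (f x)) hf.ennreal_ofReal]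
  congr 1
  refine lintegral_congr_ae (hfin.mono fun x hx => ?_)
  simp only [ENNReal.ofReal_mul (hf0 x), ENNReal.ofReal_toReal hx, mul_comm]

theorem measurable_indicator_rpow (b : ℝ) {s : Set ℝ} (hs : MeasurableSet s) :
    Measurable (s.indicator fun t => b ^ t) :=
  (measurable_const.pow measurable_id).indicator hs

theorem expSignifSum_eq_integral_map {Ω : Type*} [MeasurableSpace Ω] (P : Measure Ω)
    {Y : Ω → ℝ} (hY : Measurable Y) {m : ℕ} (hm : 1 ≤ m) {d : Fin m → ℕ}
    (hd : IsDigitTuple m d) :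
    expSignifSum P Y m d
      = ∫ x, (Set.Ico (logb 10 ((digitVal m d : ℝ) / 10 ^ (m - 1)))
          (logb 10 (((digitVal m d : ℝ) + 1) / 10 ^ (m - 1)))).indicator
            (fun t => (10 : ℝ) ^ t) (Int.fract x) ∂P.map (fun ω => logb 10 (Y ω)) := by
  have hX : Measurable fun ω => logb 10 (Y ω) := (measurable_log.comp hY).div_const _
  rw [expSignifSum, integral_map hX.aemeasurable]
  · congr 1
    funext ω
    simp only [Set.indicator, Set.mem_ofPred_eq, hasFirstDigits_iff_fract_logb_mem hm hd, signif_eq_rpow_fract]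
  · exact ((measurable_indicator_rpow 10 measurableSet_Ico).comp measurable_fract).aestronglyMeasurable

theorem expSignifSum_eq_integral_wrapped {Ω : Type*} [MeasurableSpace Ω]
    (P : Measure Ω) (Y : Ω → ℝ) (hY : Measurable Y)
    (g : ℝ → ℝ) (hg0 : ∀ x, 0 ≤ g x) (hgInt : Integrable g)
    (hgpdf : P.map (fun ω => Real.logb 10 (Y ω))
      = volume.withDensity (fun x => ENNReal.ofReal (g x)))
    (m : ℕ) (hm : 1 ≤ m) (d : Fin m → ℕ) (hd : IsDigitTuple m d) :
    expSignifSum P Y m d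
      = ∫ x in Real.logb 10 ((digitVal m d : ℝ) / 10 ^ (m - 1))..
            Real.logb 10 (((digitVal m d : ℝ) + 1) / 10 ^ (m - 1)),
          (10 : ℝ) ^ x * ∑' k : ℤ, g (x + (k : ℝ)) := by
  have hab : logb 10 ((digitVal m d : ℝ) / 10 ^ (m - 1))
      ≤ logb 10 (((digitVal m d : ℝ) + 1) / 10 ^ (m - 1)) := by
    have hpos := digitVal_pos hm hd
    exact logb_le_logb_of_le (by norm_num) (by positivity) (by gcongr; linarith)
  rw [expSignifSum_eq_integral_map P hY hm hd, hgpdf,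
    integral_comp_fract_withDensity hg0 hgInt
      (fun _ => Set.indicator_nonneg (fun t _ => by positivity) _)
      (measurable_indicator_rpow 10 measurableSet_Ico),
    intervalIntegral.integral_of_le hab, ← integral_Ico_eq_integral_Ioc]
  simp only [← Set.indicator_mul_left _ (fun t : ℝ => (10 : ℝ) ^ t)
    (fun t => ∑' k : ℤ, g (t + k))]
  rw [setIntegral_indicator measurableSet_Ico,
    Set.inter_eq_right.mpr (Ico_logb_digitVal_subset hm hd)]
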